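/- One-step error inequality for the reaction–diffusion component (key step of Theorem 3.3): Let [t₀, t₁] ⊂ ℝ with δt := t₁ − t₀ > 0. Assume 𝔹 is continuously differentiable on a neighbourhood of the closure of Ω, p̄ : Ω̄ × [t₀, t₁] → ℝ is continuous, q̄ : Ω̄ × [t₀, t₁] → ℝ is continuous, continuously differentiable in t, twice continuously differentiable in x, and ∂ₜq̄(x,t) − div(𝔹∇q̄)(x,t) = g(p̄(x,t), q̄(x,t)) for all (x,t) ∈ Ω × (t₀, t₁). Assume ‖Πw‖_{L²(Ω)} ≤ C_D‖Gw‖_{L²(Ω)^d} for all w ∈ X. Denote by ∇q̄ₐ, D_Bₐ, gₐ the time averages δt⁻¹∫_{t₀}^{t₁}(·) dt over (t₀, t₁) of ∇q̄, div(𝔹∇q̄), g(p̄, q̄) respectively, and set ∂̄_q := (q̄(·, t₁) − q̄(·, t₀))/δt. Let (p⁻, q⁻) ∈ K_D × X and let (p, q) ∈ K_D × X be a one-step solution of the gradient scheme from (p⁻, q⁻) with step δt. Let Q⁻, Q ∈ X, set ℛ̃ := Q − q and ℛ̃⁻ := Q⁻ − q⁻, and let Ẽ_t, Ẽ_g, W_B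 ≥ 0 be reals with ‖δt⁻¹(ΠQ − ΠQ⁻) − ∂̄_q‖_{L²(Ω)} ≤ Ẽ_t, ‖GQ − ∇q̄ₐ‖_{L²(Ω)^d} ≤ Ẽ_g, and |∫_Ω (Πw·D_Bₐ + (𝔹∇q̄ₐ)·Gw) dx| ≤ W_B·‖Gw‖_{L²(Ω)^d} for all w ∈ X. Then for every w ∈ X: ∫_Ω Πw·δt⁻¹(Πℛ̃ − Πℛ̃⁻) dx + ∫_Ω (𝔹Gℛ̃)·Gw dx ≤ ∫_Ω Πw·(gₐ − g(Πp, Πq)) dx + (C_D·Ẽ_t + d₂·Ẽ_g + W_B)·‖Gw‖_{L²(Ω)^d}. -/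

import Mathlib

open MeasureTheory RealInnerProductSpace

noncomputable section

/-- Euclidean space `ℝ^d`. -/
abbrev Euc (d : ℕ) : Type := EuclideanSpace ℝ (Fin d)

/-- The discrete convex set `K_D = {φ ∈ X : Πφ ≥ χ_D a.e. in Ω}`. -/
def KD {α : Type} [MeasurableSpace α] (μ : Measure α)
    {X : Type} [AddCommGroup X] [Module ℝ X]
    (Pi : X →ₗ[ℝ] Lp ℝ 2 μ) (χD : Lp ℝ 2 μ) : Set X :=
  {φ : X | ∀ᵐ x ∂μ, χD x ≤ Pi φ x}

/-- `(p, q)` is a one-step solution of the gradient scheme from `(pm, qm)` with step `δt`: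
`p` belongs to `K_D` and the discrete variational inequality and equality hold. -/
def IsOneStepSol {α : Type} [MeasurableSpace α] (μ : Measure α)
    {V : Type} [NormedAddCommGroup V] [InnerProductSpace ℝ V]
    {X : Type} [AddCommGroup X] [Module ℝ X]
    (Pi : X →ₗ[ℝ] Lp ℝ 2 μ) (G : X →ₗ[ℝ] Lp V 2 μ) (χD : Lp ℝ 2 μ)
    (A B : α → V →ₗ[ℝ] V) (f g : ℝ → ℝ → ℝ)
    (δt : ℝ) (pm qm p q : X) : Prop :=
  p ∈ KD μ Pi χD ∧
  (∀ φ ∈ KD μ Pi χD,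
    (∫ x, δt⁻¹ * (Pi p x - Pi pm x) * (Pi p x - Pi φ x) ∂μ)
      + (∫ x, ⟪A x (G p x), G p x - G φ x⟫ ∂μ)
      ≤ ∫ x, f (Pi p x) (Pi q x) * (Pi p x - Pi φ x) ∂μ) ∧
  (∀ ψ : X,
    (∫ x, δt⁻¹ * (Pi q x - Pi qm x) * (Pi ψ x) ∂μ)
      + (∫ x, ⟪B x (G q x), G ψ x⟫ ∂μ)
      = ∫ x, g (Pi p x) (Pi q x) * (Pi ψ x) ∂μ)

section Aux

variable {α : Type} [MeasurableSpace α] {μ : Measure α}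

lemma inner_integrable {E : Type} [NormedAddCommGroup E] [InnerProductSpace ℝ E]
    {f g : α → E} (hf : MemLp f 2 μ) (hg : MemLp g 2 μ) :
    Integrable (fun x => ⟪f x, g x⟫) μ := by
  have h := MeasureTheory.L2.integrable_inner (𝕜 := ℝ) (hf.toLp f) (hg.toLp g)
  refine h.congr ?_
  filter_upwards [hf.coeFn_toLp, hg.coeFn_toLp] with x h1 h2
  rw [h1, h2]

lemma abs_integral_inner_le {E : Type} [NormedAddCommGroup E] [InnerProductSpace ℝ E]
    {f g : α → E} (hf : MemLp f 2 μ) (hg : MemLp g 2 μ) :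
    |∫ x, ⟪f x, g x⟫ ∂μ| ≤ (eLpNorm f 2 μ).toReal * (eLpNorm g 2 μ).toReal := by
  have h1 : ∫ x, ⟪f x, g x⟫ ∂μ = ⟪hf.toLp f, hg.toLp g⟫ := by
    rw [MeasureTheory.L2.inner_def]
    refine integral_congr_ae ?_
    filter_upwards [hf.coeFn_toLp, hg.coeFn_toLp] with x h1 h2
    rw [h1, h2]
  rw [h1]
  calc |⟪hf.toLp f, hg.toLp g⟫| ≤ ‖hf.toLp f‖ * ‖hg.toLp g‖ := abs_real_inner_le_norm _ _
    _ = (eLpNorm f 2 μ).toReal * (eLpNorm g 2 μ).toReal := by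
        rw [MeasureTheory.Lp.norm_toLp, MeasureTheory.Lp.norm_toLp]

lemma real_inner_mul (a b : ℝ) : ⟪a, b⟫ = a * b := by
  simp [RCLike.inner_apply, mul_comm]

lemma mul_integrable {f g : α → ℝ} (hf : MemLp f 2 μ) (hg : MemLp g 2 μ) :
    Integrable (fun x => f x * g x) μ := by
  have := inner_integrable hf hg
  simpa [real_inner_mul, mul_comm] using this

lemma abs_integral_mul_le {f g : α → ℝ} (hf : MemLp f 2 μ) (hg : MemLp g 2 μ) :
    |∫ x, f x * g x ∂μ| ≤ (eLpNorm f 2 μ).toReal * (eLpNorm g 2 μ).toReal := by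
  have := abs_integral_inner_le hf hg
  simpa [real_inner_mul, mul_comm] using this

end Aux

/-- Operator norm bound for a symmetric positive operator with form bound `d₂`. -/
lemma opNorm_le_of_form_bound {V : Type} [NormedAddCommGroup V] [InnerProductSpace ℝ V]
    (B : V →ₗ[ℝ] V) (d₂ : ℝ) (hd₂ : 0 ≤ d₂)
    (hsym : ∀ ξ η, ⟪B ξ, η⟫ = ⟪ξ, B η⟫)
    (hell : ∀ ξ, 0 ≤ ⟪ξ, B ξ⟫ ∧ ⟪ξ, B ξ⟫ ≤ d₂ * ‖ξ‖ ^ 2) :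
    ∀ ξ, ‖B ξ‖ ≤ d₂ * ‖ξ‖ := by
  have key : ∀ u v : V, ⟪B u, v⟫ ^ 2 ≤ ⟪u, B u⟫ * ⟪v, B v⟫ := by
    intro u v
    have hq : ∀ t : ℝ, 0 ≤ ⟪v, B v⟫ * (t * t) + (2 * ⟪B u, v⟫) * t + ⟪u, B u⟫ := by
      intro t
      have h0 := (hell (u + t • v)).1
      have hexp : ⟪u + t • v, B (u + t • v)⟫
          = ⟪v, B v⟫ * (t * t) + (2 * ⟪B u, v⟫) * t + ⟪u, B u⟫ := by
        rw [map_add, LinearMap.map_smul]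
        rw [inner_add_left, inner_add_right, inner_add_right]
        rw [real_inner_smul_left, real_inner_smul_left, real_inner_smul_right,
          real_inner_smul_right]
        have h1 : ⟪u, B v⟫ = ⟪B u, v⟫ := (hsym u v).symm
        have h2 : ⟪v, B u⟫ = ⟪B u, v⟫ := (real_inner_comm v (B u)).symm
        rw [h1, h2]; ring
      linarith [hexp ▸ h0]
    have hd := discrim_le_zero (by intro t; simpa using hq t)
    rw [discrim] at hd
    nlinarith
  intro ξ
  have h1 : ‖B ξ‖ ^ 2 = ⟪B ξ, B ξ⟫ := (real_inner_self_eq_norm_sq _).symm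
  have h2 := key ξ (B ξ)
  have h3 := (hell ξ).2
  have h4 := (hell (B ξ)).2
  have h5 := (hell ξ).1
  have h6 := (hell (B ξ)).1
  rcases eq_or_lt_of_le (norm_nonneg (B ξ)) with hX | hX
  · rw [← hX]; positivity
  · have h7 : ⟪ξ, B ξ⟫ * ⟪B ξ, B (B ξ)⟫ ≤ (d₂ * ‖ξ‖ ^ 2) * (d₂ * ‖B ξ‖ ^ 2) :=
      mul_le_mul h3 h4 h6 (by positivity)
    have h8 : ‖B ξ‖ ^ 2 * ‖B ξ‖ ^ 2 ≤ (d₂ * ‖ξ‖) ^ 2 * ‖B ξ‖ ^ 2 := by nlinarith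
    have h9 : ‖B ξ‖ ^ 2 ≤ (d₂ * ‖ξ‖) ^ 2 :=
      le_of_mul_le_mul_right h8 (by positivity)
    nlinarith [mul_nonneg hd₂ (norm_nonneg ξ)]

lemma aesm_param_integral {dim : ℕ} {Ω : Set (Euc dim)} (hΩ : MeasurableSet Ω)
    {E : Type} [NormedAddCommGroup E] [NormedSpace ℝ E]
    {t₀ t₁ : ℝ} (ht : t₀ ≤ t₁) {F : ℝ → Euc dim → E}
    (hF : ContinuousOn (fun z : Euc dim × ℝ => F z.2 z.1) (Ω ×ˢ Set.Ioc t₀ t₁)) :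
    AEStronglyMeasurable (fun x => ∫ s in t₀..t₁, F s x) (volume.restrict Ω) := by
  have h1 : (fun x => ∫ s in t₀..t₁, F s x)
      = fun x => ∫ s, F s x ∂(volume.restrict (Set.Ioc t₀ t₁)) := by
    funext x; exact intervalIntegral.integral_of_le ht
  rw [h1]
  have hprod : AEStronglyMeasurable (fun z : Euc dim × ℝ => F z.2 z.1)
      ((volume.restrict Ω).prod (volume.restrict (Set.Ioc t₀ t₁))) := by
    rw [Measure.prod_restrict]
    exact hF.aestronglyMeasurable (hΩ.prod measurableSet_Ioc)
  exact hprod.integral_prod_right'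

lemma aesm_B_apply {dim : ℕ} {μ : Measure (Euc dim)}
    (B : Euc dim → Euc dim →ₗ[ℝ] Euc dim)
    (hB : ∀ ξ, AEStronglyMeasurable (fun x => B x ξ) μ)
    {u : Euc dim → Euc dim} (hu : AEStronglyMeasurable u μ) :
    AEStronglyMeasurable (fun x => B x (u x)) μ := by
  have hrepr : ∀ x, B x (u x)
      = ∑ i : Fin dim, u x i • B x (EuclideanSpace.single i (1:ℝ)) := by
    intro x
    have hux : u x = ∑ i : Fin dim, u x i • EuclideanSpace.single i (1:ℝ) := by
      ext j
      simp [EuclideanSpace.single_apply, PiLp.smul_apply, Pi.single_apply]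
    conv_lhs => rw [hux]
    rw [map_sum]
    simp [LinearMap.map_smul]
  simp_rw [hrepr]
  apply Finset.aestronglyMeasurable_fun_sum
  intro i _
  exact (((EuclideanSpace.proj i).continuous.comp_aestronglyMeasurable hu)).smul (hB _)

set_option maxHeartbeats 2000000 in
/-- **One-step error inequality for the reaction–diffusion component
(key step of Theorem 3.3).** -/
theorem one_step_error_reaction
    {dim : ℕ} (hdim : 1 ≤ dim)
    (Ω : Set (Euc dim)) (hΩo : IsOpen Ω) (hΩb : Bornology.IsBounded Ω)
    (hΩc : IsConnected Ω)
    {X : Type} [AddCommGroup X] [Module ℝ X] [FiniteDimensional ℝ X]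
    (Pi : X →ₗ[ℝ] Lp ℝ 2 (volume.restrict Ω))
    (G : X →ₗ[ℝ] Lp (Euc dim) 2 (volume.restrict Ω))
    (hGnorm : ∀ φ : X, G φ = 0 → φ = 0)
    (χD : Lp ℝ 2 (volume.restrict Ω))
    (A B : Euc dim → Euc dim →ₗ[ℝ] Euc dim)
    (hAmeas : ∀ ξ, Measurable fun x => A x ξ)
    (d₁ d₂ : ℝ) (hd₁ : 0 < d₁) (hd₁₂ : d₁ ≤ d₂)
    (hAsym : ∀ᵐ x ∂(volume.restrict Ω), ∀ ξ η, ⟪A x ξ, η⟫ = ⟪ξ, A x η⟫)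
    (hBsym : ∀ x ξ η, ⟪B x ξ, η⟫ = ⟪ξ, B x η⟫)
    (hAell : ∀ᵐ x ∂(volume.restrict Ω), ∀ ξ,
      d₁ * ‖ξ‖ ^ 2 ≤ ⟪ξ, A x ξ⟫ ∧ ⟪ξ, A x ξ⟫ ≤ d₂ * ‖ξ‖ ^ 2)
    (hBell : ∀ x ξ, d₁ * ‖ξ‖ ^ 2 ≤ ⟪ξ, B x ξ⟫ ∧ ⟪ξ, B x ξ⟫ ≤ d₂ * ‖ξ‖ ^ 2)
    -- `𝔹` is continuously differentiable on an open neighbourhood `U` of `closure Ω`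
    (U : Set (Euc dim)) (hUo : IsOpen U) (hUΩ : closure Ω ⊆ U)
    (hB1 : ∀ ξ, ContDiffOn ℝ 1 (fun x => B x ξ) U)
    (f g : ℝ → ℝ → ℝ) (M : ℝ) (hM : 0 < M)
    (hf : ∀ a b a' b', |f a b - f a' b'| ≤ M * (|a - a'| + |b - b'|))
    (hg : ∀ a b a' b', |g a b - g a' b'| ≤ M * (|a - a'| + |b - b'|))
    -- coercivity constant
    (CD : ℝ) (hCD : ∀ w : X, ‖Pi w‖ ≤ CD * ‖G w‖)
    -- time interval
    (t₀ t₁ : ℝ) (ht : t₀ < t₁) (δt : ℝ) (hδt : δt = t₁ - t₀)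
    -- exact solution data on `closure Ω × [t₀, t₁]`
    (pbar qbar : ℝ → Euc dim → ℝ)
    (gradq : ℝ → Euc dim → Euc dim)
    (dtq divB : ℝ → Euc dim → ℝ)
    (DB : ℝ → Euc dim → (Euc dim →L[ℝ] Euc dim))
    (hpc : ContinuousOn (fun z : Euc dim × ℝ => pbar z.2 z.1)
      (closure Ω ×ˢ Set.Icc t₀ t₁))
    (hqc : ContinuousOn (fun z : Euc dim × ℝ => qbar z.2 z.1)
      (closure Ω ×ˢ Set.Icc t₀ t₁))
    -- `q̄` is continuously differentiable in time, with derivative `dtq`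
    (hdt : ∀ x ∈ Ω, ∀ t ∈ Set.Icc t₀ t₁,
      HasDerivWithinAt (fun s => qbar s x) (dtq t x) (Set.Icc t₀ t₁) t)
    (hdtc : ContinuousOn (fun z : Euc dim × ℝ => dtq z.2 z.1)
      (closure Ω ×ˢ Set.Icc t₀ t₁))
    -- `q̄` is twice continuously differentiable in space: spatial gradient `gradq`,
    -- and the vector field `x ↦ 𝔹(x)∇q̄(x,t)` is differentiable with derivative `DB`,
    -- whose trace is the divergence `divB = div(𝔹∇q̄)`
    (hgrad : ∀ t ∈ Set.Icc t₀ t₁, ∀ x ∈ Ω, HasGradientAt (fun y => qbar t y) (gradq t x) x)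
    (hgradc : ContinuousOn (fun z : Euc dim × ℝ => gradq z.2 z.1)
      (closure Ω ×ˢ Set.Icc t₀ t₁))
    (hDB : ∀ t ∈ Set.Icc t₀ t₁, ∀ x ∈ Ω,
      HasFDerivAt (fun y => B y (gradq t y)) (DB t x) x)
    (hdivB : ∀ t x, divB t x = LinearMap.trace ℝ (Euc dim) (DB t x : Euc dim →ₗ[ℝ] Euc dim))
    (hdivBc : ContinuousOn (fun z : Euc dim × ℝ => divB z.2 z.1)
      (closure Ω ×ˢ Set.Icc t₀ t₁))
    -- the PDE `∂ₜq̄ − div(𝔹∇q̄) = g(p̄, q̄)` in `Ω × (t₀, t₁)`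
    (hPDE : ∀ x ∈ Ω, ∀ t ∈ Set.Ioo t₀ t₁,
      dtq t x - divB t x = g (pbar t x) (qbar t x))
    -- discrete solution: one step of the gradient scheme
    (pm qm p q : X) (hpm : pm ∈ KD (volume.restrict Ω) Pi χD)
    (hstep : IsOneStepSol (volume.restrict Ω) Pi G χD A B f g δt pm qm p q)
    -- interpolants
    (Qm Q : X)
    -- interpolation and limit-conformity error bounds
    (Et Eg WB : ℝ) (hEt0 : 0 ≤ Et) (hEg0 : 0 ≤ Eg) (hWB0 : 0 ≤ WB)
    (hEt : eLpNorm (fun x => δt⁻¹ * (Pi Q x - Pi Qm x) - δt⁻¹ * (qbar t₁ x - qbar t₀ x))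
        2 (volume.restrict Ω) ≤ ENNReal.ofReal Et)
    (hEg : eLpNorm (fun x => G Q x - δt⁻¹ • ∫ s in t₀..t₁, gradq s x)
        2 (volume.restrict Ω) ≤ ENNReal.ofReal Eg)
    (hWB : ∀ w : X,
      |∫ x, (Pi w x * (δt⁻¹ * ∫ s in t₀..t₁, divB s x)
          + ⟪B x (δt⁻¹ • ∫ s in t₀..t₁, gradq s x), G w x⟫) ∂(volume.restrict Ω)|
        ≤ WB * ‖G w‖) :
    ∀ w : X,
      (∫ x, Pi w x * (δt⁻¹ * (Pi (Q - q) x - Pi (Qm - qm) x)) ∂(volume.restrict Ω))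
        + (∫ x, ⟪B x (G (Q - q) x), G w x⟫ ∂(volume.restrict Ω))
      ≤ (∫ x, Pi w x
            * ((δt⁻¹ * ∫ s in t₀..t₁, g (pbar s x) (qbar s x)) - g (Pi p x) (Pi q x))
            ∂(volume.restrict Ω))
        + (CD * Et + d₂ * Eg + WB) * ‖G w‖ := by
  intro w
  have hΩm : MeasurableSet Ω := hΩo.measurableSet
  have hfinμ : IsFiniteMeasure (volume.restrict Ω) := ⟨by rw [Measure.restrict_apply_univ]; exact hΩb.measure_lt_top⟩
  have ht01 : t₀ ≤ t₁ := ht.le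
  have hd₂0 : 0 ≤ d₂ := le_trans hd₁.le hd₁₂
  have hcl : Ω ⊆ closure Ω := subset_closure
  -- pointwise operator norm bound for B
  have hBop : ∀ x ξ, ‖B x ξ‖ ≤ d₂ * ‖ξ‖ := by
    intro x
    refine opNorm_le_of_form_bound (B x) d₂ hd₂0 (hBsym x) (fun ξ => ⟨?_, (hBell x ξ).2⟩)
    exact le_trans (mul_nonneg hd₁.le (sq_nonneg _)) (hBell x ξ).1
  -- continuity of time-slices of qbar
  have hqslice : ∀ t ∈ Set.Icc t₀ t₁, ContinuousOn (fun x => qbar t x) Ω := by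
    intro t htI
    exact hqc.comp ((continuous_id.prodMk continuous_const).continuousOn)
      (fun x hx => Set.mk_mem_prod (hcl hx) htI)
  have haq1 : AEStronglyMeasurable (fun x => qbar t₁ x) (volume.restrict Ω) :=
    (hqslice t₁ (Set.right_mem_Icc.2 ht01)).aestronglyMeasurable hΩm
  have haq0 : AEStronglyMeasurable (fun x => qbar t₀ x) (volume.restrict Ω) :=
    (hqslice t₀ (Set.left_mem_Icc.2 ht01)).aestronglyMeasurable hΩm
  -- MemLp facts
  have hrt_m : MemLp (fun x => δt⁻¹ * (Pi Q x - Pi Qm x)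
      - δt⁻¹ * (qbar t₁ x - qbar t₀ x)) 2 (volume.restrict Ω) := by
    refine ⟨?_, lt_of_le_of_lt hEt ENNReal.ofReal_lt_top⟩
    exact (((Lp.aestronglyMeasurable (Pi Q)).sub
      (Lp.aestronglyMeasurable (Pi Qm))).const_mul _).sub ((haq1.sub haq0).const_mul _)
  have hQQm_m : MemLp (fun x => δt⁻¹ * (Pi Q x - Pi Qm x)) 2 (volume.restrict Ω) :=
    ((Lp.memLp (Pi Q)).sub (Lp.memLp (Pi Qm))).const_mul δt⁻¹
  have hdq_m : MemLp (fun x => δt⁻¹ * (qbar t₁ x - qbar t₀ x)) 2 (volume.restrict Ω) := by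
    refine (memLp_congr_ae (Filter.Eventually.of_forall fun x => ?_)).mp (hQQm_m.sub hrt_m)
    show (δt⁻¹ * (Pi Q x - Pi Qm x)) - (δt⁻¹ * (Pi Q x - Pi Qm x)
      - δt⁻¹ * (qbar t₁ x - qbar t₀ x)) = δt⁻¹ * (qbar t₁ x - qbar t₀ x)
    ring
  have hGa_aesm : AEStronglyMeasurable (fun x => δt⁻¹ • ∫ s in t₀..t₁, gradq s x) (volume.restrict Ω) :=
    (aesm_param_integral hΩm ht01
      (hgradc.mono (Set.prod_mono hcl Set.Ioc_subset_Icc_self))).const_smul δt⁻¹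
  have hrg_m : MemLp (fun x => G Q x - δt⁻¹ • ∫ s in t₀..t₁, gradq s x) 2 (volume.restrict Ω) :=
    ⟨(Lp.aestronglyMeasurable (G Q)).sub hGa_aesm, lt_of_le_of_lt hEg ENNReal.ofReal_lt_top⟩
  have hGa_m : MemLp (fun x => δt⁻¹ • ∫ s in t₀..t₁, gradq s x) 2 (volume.restrict Ω) := by
    refine (memLp_congr_ae (Filter.Eventually.of_forall fun x => ?_)).mp
      ((Lp.memLp (G Q)).sub hrg_m)
    show G Q x - (G Q x - δt⁻¹ • ∫ s in t₀..t₁, gradq s x)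
      = δt⁻¹ • ∫ s in t₀..t₁, gradq s x
    abel
  have hK : IsCompact (closure Ω ×ˢ Set.Icc t₀ t₁) := hΩb.isCompact_closure.prod isCompact_Icc
  obtain ⟨Cb, hCb⟩ := hK.exists_bound_of_continuousOn hdivBc
  have hDb_m : MemLp (fun x => δt⁻¹ * ∫ s in t₀..t₁, divB s x) 2 (volume.restrict Ω) := by
    refine MemLp.of_bound ((aesm_param_integral hΩm ht01
      (hdivBc.mono (Set.prod_mono hcl Set.Ioc_subset_Icc_self))).const_mul δt⁻¹)
      (|δt⁻¹| * (Cb * |t₁ - t₀|)) ?_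
    filter_upwards [ae_restrict_mem hΩm] with x hx
    rw [norm_mul, Real.norm_eq_abs]
    refine mul_le_mul_of_nonneg_left ?_ (abs_nonneg _)
    refine intervalIntegral.norm_integral_le_of_norm_le_const ?_
    intro s hs
    rw [Set.uIoc_of_le ht01] at hs
    exact hCb (x, s) (Set.mk_mem_prod (hcl hx) (Set.Ioc_subset_Icc_self hs))
  -- g is continuous
  have hgcont : Continuous (fun z : ℝ × ℝ => g z.1 z.2) := by
    have hlip : LipschitzWith (Real.toNNReal (2 * M)) (fun z : ℝ × ℝ => g z.1 z.2) := by
      refine LipschitzWith.of_dist_le_mul fun z z' => ?_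
      have h2 : dist z.1 z'.1 ≤ dist z z' := by rw [Prod.dist_eq]; exact le_max_left _ _
      have h3 : dist z.2 z'.2 ≤ dist z z' := by rw [Prod.dist_eq]; exact le_max_right _ _
      calc dist (g z.1 z.2) (g z'.1 z'.2) = |g z.1 z.2 - g z'.1 z'.2| := Real.dist_eq _ _
        _ ≤ M * (|z.1 - z'.1| + |z.2 - z'.2|) := hg _ _ _ _
        _ = M * (dist z.1 z'.1 + dist z.2 z'.2) := by rw [Real.dist_eq, Real.dist_eq]
        _ ≤ M * (dist z z' + dist z z') :=
            mul_le_mul_of_nonneg_left (add_le_add h2 h3) hM.le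
        _ = (2 * M) * dist z z' := by ring
        _ = (Real.toNNReal (2 * M) : ℝ) * dist z z' := by
            rw [Real.coe_toNNReal _ (by positivity)]
    exact hlip.continuous
  have hgpq_aesm : AEStronglyMeasurable (fun x => g (Pi p x) (Pi q x)) (volume.restrict Ω) :=
    hgcont.comp_aestronglyMeasurable
      ((Lp.aestronglyMeasurable (Pi p)).prodMk (Lp.aestronglyMeasurable (Pi q)))
  have hgpq_m : MemLp (fun x => g (Pi p x) (Pi q x)) 2 (volume.restrict Ω) := by
    have hdom_m : MemLp (fun x => |g 0 0| + M * (‖Pi p x‖ + ‖Pi q x‖)) 2 (volume.restrict Ω) :=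
      (memLp_const (|g 0 0|)).add (((Lp.memLp (Pi p)).norm.add (Lp.memLp (Pi q)).norm).const_mul M)
    refine MemLp.of_le hdom_m hgpq_aesm ?_
    filter_upwards with x
    have h1 : |g (Pi p x) (Pi q x)| ≤ |g 0 0| + M * (|Pi p x| + |Pi q x|) := by
      have h2 := hg (Pi p x) (Pi q x) 0 0
      simp only [sub_zero] at h2
      calc |g (Pi p x) (Pi q x)| = |(g (Pi p x) (Pi q x) - g 0 0) + g 0 0| := by ring_nf
        _ ≤ |g (Pi p x) (Pi q x) - g 0 0| + |g 0 0| := abs_add_le _ _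
        _ ≤ |g 0 0| + M * (|Pi p x| + |Pi q x|) := by linarith
    calc ‖g (Pi p x) (Pi q x)‖ = |g (Pi p x) (Pi q x)| := Real.norm_eq_abs _
      _ ≤ |g 0 0| + M * (‖Pi p x‖ + ‖Pi q x‖) := by
          rw [Real.norm_eq_abs, Real.norm_eq_abs]; exact h1
      _ ≤ ‖|g 0 0| + M * (‖Pi p x‖ + ‖Pi q x‖)‖ := le_abs_self _
  -- integrability of products
  have hPw : MemLp (⇑(Pi w)) 2 (volume.restrict Ω) := Lp.memLp (Pi w)
  have hGw : MemLp (⇑(G w)) 2 (volume.restrict Ω) := Lp.memLp (G w)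
  have int_QQm : Integrable (fun x => Pi w x * (δt⁻¹ * (Pi Q x - Pi Qm x))) (volume.restrict Ω) :=
    mul_integrable hPw hQQm_m
  have int_qqm : Integrable (fun x => Pi w x * (δt⁻¹ * (Pi q x - Pi qm x))) (volume.restrict Ω) :=
    mul_integrable hPw (((Lp.memLp (Pi q)).sub (Lp.memLp (Pi qm))).const_mul _)
  have int_rt : Integrable (fun x => Pi w x * (δt⁻¹ * (Pi Q x - Pi Qm x)
      - δt⁻¹ * (qbar t₁ x - qbar t₀ x))) (volume.restrict Ω) := mul_integrable hPw hrt_m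
  have int_dq : Integrable (fun x => Pi w x * (δt⁻¹ * (qbar t₁ x - qbar t₀ x))) (volume.restrict Ω) :=
    mul_integrable hPw hdq_m
  have int_Db : Integrable (fun x => Pi w x * (δt⁻¹ * ∫ s in t₀..t₁, divB s x)) (volume.restrict Ω) :=
    mul_integrable hPw hDb_m
  have int_gpq : Integrable (fun x => g (Pi p x) (Pi q x) * Pi w x) (volume.restrict Ω) :=
    mul_integrable hgpq_m hPw
  have hBaesm : ∀ ξ, AEStronglyMeasurable (fun x => B x ξ) (volume.restrict Ω) := fun ξ =>
    (((hB1 ξ).continuousOn).mono (hcl.trans hUΩ)).aestronglyMeasurable hΩm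
  have intB : ∀ (v : Euc dim → Euc dim), MemLp v 2 (volume.restrict Ω) →
      Integrable (fun x => ⟪B x (v x), G w x⟫) (volume.restrict Ω) := by
    intro v hv
    have haesm : AEStronglyMeasurable (fun x => ⟪B x (v x), G w x⟫) (volume.restrict Ω) :=
      (aesm_B_apply B hBaesm hv.aestronglyMeasurable).inner (Lp.aestronglyMeasurable (G w))
    refine Integrable.mono' ((mul_integrable hv.norm hGw.norm).const_mul d₂) haesm ?_
    filter_upwards with x
    calc ‖⟪B x (v x), G w x⟫‖ = |⟪B x (v x), G w x⟫| := Real.norm_eq_abs _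
      _ ≤ ‖B x (v x)‖ * ‖G w x‖ := abs_real_inner_le_norm _ _
      _ ≤ (d₂ * ‖v x‖) * ‖G w x‖ := mul_le_mul_of_nonneg_right (hBop x _) (norm_nonneg _)
      _ = d₂ * (‖v x‖ * ‖G w x‖) := by ring
  -- the FTC/PDE pointwise identity
  have hFTC : ∀ x ∈ Ω,
      δt⁻¹ * (qbar t₁ x - qbar t₀ x) - δt⁻¹ * (∫ s in t₀..t₁, divB s x)
        = δt⁻¹ * ∫ s in t₀..t₁, g (pbar s x) (qbar s x) := by
    intro x hx
    have hmk : Continuous (fun s : ℝ => ((x : Euc dim), s)) :=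
      continuous_const.prodMk continuous_id
    have hmapsTo : ∀ s ∈ Set.Icc t₀ t₁, ((x : Euc dim), s) ∈ closure Ω ×ˢ Set.Icc t₀ t₁ :=
      fun s hs => Set.mk_mem_prod (hcl hx) hs
    have hdts : ContinuousOn (fun s => dtq s x) (Set.Icc t₀ t₁) :=
      hdtc.comp hmk.continuousOn hmapsTo
    have hdivs : ContinuousOn (fun s => divB s x) (Set.Icc t₀ t₁) :=
      hdivBc.comp hmk.continuousOn hmapsTo
    have idts : IntervalIntegrable (fun s => dtq s x) volume t₀ t₁ := by
      apply ContinuousOn.intervalIntegrable; rwa [Set.uIcc_of_le ht01]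
    have idivs : IntervalIntegrable (fun s => divB s x) volume t₀ t₁ := by
      apply ContinuousOn.intervalIntegrable; rwa [Set.uIcc_of_le ht01]
    have h1 : ∫ s in t₀..t₁, dtq s x = qbar t₁ x - qbar t₀ x := by
      refine intervalIntegral.integral_eq_sub_of_hasDeriv_right_of_le ht01
        (fun t htI => (hdt x hx t htI).continuousWithinAt) ?_ idts
      intro s hs
      exact ((hdt x hx s (Set.Ioo_subset_Icc_self hs)).hasDerivAt
        (Icc_mem_nhds hs.1 hs.2)).hasDerivWithinAt
    have h2 : (∫ s in t₀..t₁, (dtq s x - divB s x))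
        = ∫ s in t₀..t₁, g (pbar s x) (qbar s x) := by
      refine intervalIntegral.integral_congr_ae ?_
      have hne : ∀ᵐ s : ℝ, s ≠ t₁ := by
        refine ae_iff.mpr ?_
        simpa using measure_singleton t₁
      filter_upwards [hne] with s hsne hsmem
      rw [Set.uIoc_of_le ht01] at hsmem
      exact hPDE x hx s ⟨hsmem.1, lt_of_le_of_ne hsmem.2 hsne⟩
    have h3 : (∫ s in t₀..t₁, (dtq s x - divB s x))
        = (∫ s in t₀..t₁, dtq s x) - ∫ s in t₀..t₁, divB s x :=
      intervalIntegral.integral_sub idts idivs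
    rw [← h2, h3, h1]; ring
  -- splitting the left-hand side
  have E1 : (∫ x, Pi w x * (δt⁻¹ * (Pi (Q - q) x - Pi (Qm - qm) x)) ∂(volume.restrict Ω))
      = (∫ x, Pi w x * (δt⁻¹ * (Pi Q x - Pi Qm x)) ∂(volume.restrict Ω))
        - ∫ x, Pi w x * (δt⁻¹ * (Pi q x - Pi qm x)) ∂(volume.restrict Ω) := by
    rw [← integral_sub int_QQm int_qqm]
    refine integral_congr_ae ?_
    rw [map_sub, map_sub]
    filter_upwards [Lp.coeFn_sub (Pi Q) (Pi q), Lp.coeFn_sub (Pi Qm) (Pi qm)] with x h1 h2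
    beta_reduce
    rw [h1, h2]
    show Pi w x * (δt⁻¹ * ((Pi Q x - Pi q x) - (Pi Qm x - Pi qm x))) = _
    ring
  have E2 : (∫ x, ⟪B x (G (Q - q) x), G w x⟫ ∂(volume.restrict Ω))
      = (∫ x, ⟪B x (G Q x), G w x⟫ ∂(volume.restrict Ω)) - ∫ x, ⟪B x (G q x), G w x⟫ ∂(volume.restrict Ω) := by
    rw [← integral_sub (intB _ (Lp.memLp (G Q))) (intB _ (Lp.memLp (G q)))]
    refine integral_congr_ae ?_
    rw [map_sub]
    filter_upwards [Lp.coeFn_sub (G Q) (G q)] with x h1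
    beta_reduce
    rw [h1]
    show ⟪B x (G Q x - G q x), G w x⟫ = _
    rw [map_sub, inner_sub_left]
  have E3 : (∫ x, Pi w x * (δt⁻¹ * (Pi Q x - Pi Qm x)) ∂(volume.restrict Ω))
      = (∫ x, Pi w x * (δt⁻¹ * (Pi Q x - Pi Qm x)
          - δt⁻¹ * (qbar t₁ x - qbar t₀ x)) ∂(volume.restrict Ω))
        + ∫ x, Pi w x * (δt⁻¹ * (qbar t₁ x - qbar t₀ x)) ∂(volume.restrict Ω) := by
    rw [← integral_add int_rt int_dq]
    refine integral_congr_ae (Filter.Eventually.of_forall fun x => ?_)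
    ring
  have E4 : (∫ x, ⟪B x (G Q x), G w x⟫ ∂(volume.restrict Ω))
      = (∫ x, ⟪B x (G Q x - δt⁻¹ • ∫ s in t₀..t₁, gradq s x), G w x⟫ ∂(volume.restrict Ω))
        + ∫ x, ⟪B x (δt⁻¹ • ∫ s in t₀..t₁, gradq s x), G w x⟫ ∂(volume.restrict Ω) := by
    rw [← integral_add (intB _ hrg_m) (intB _ hGa_m)]
    refine integral_congr_ae (Filter.Eventually.of_forall fun x => ?_)
    beta_reduce
    rw [← inner_add_left, ← map_add, sub_add_cancel]
  have int_diff : Integrable (fun x => Pi w x * ((δt⁻¹ * (qbar t₁ x - qbar t₀ x))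
      - (δt⁻¹ * ∫ s in t₀..t₁, divB s x))) (volume.restrict Ω) := by
    refine (int_dq.sub int_Db).congr (Filter.Eventually.of_forall fun x => ?_)
    show Pi w x * (δt⁻¹ * (qbar t₁ x - qbar t₀ x))
      - Pi w x * (δt⁻¹ * ∫ s in t₀..t₁, divB s x) = _
    ring
  have E5 : (∫ x, Pi w x * (δt⁻¹ * (qbar t₁ x - qbar t₀ x)) ∂(volume.restrict Ω))
      = (∫ x, Pi w x * ((δt⁻¹ * (qbar t₁ x - qbar t₀ x))
          - (δt⁻¹ * ∫ s in t₀..t₁, divB s x)) ∂(volume.restrict Ω))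
        + ∫ x, Pi w x * (δt⁻¹ * ∫ s in t₀..t₁, divB s x) ∂(volume.restrict Ω) := by
    rw [← integral_add int_diff int_Db]
    refine integral_congr_ae (Filter.Eventually.of_forall fun x => ?_)
    ring
  have E6 : (∫ x, Pi w x * ((δt⁻¹ * ∫ s in t₀..t₁, g (pbar s x) (qbar s x))
        - g (Pi p x) (Pi q x)) ∂(volume.restrict Ω))
      = (∫ x, Pi w x * ((δt⁻¹ * (qbar t₁ x - qbar t₀ x))
          - (δt⁻¹ * ∫ s in t₀..t₁, divB s x)) ∂(volume.restrict Ω))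
        - ∫ x, g (Pi p x) (Pi q x) * Pi w x ∂(volume.restrict Ω) := by
    rw [← integral_sub int_diff int_gpq]
    refine integral_congr_ae ?_
    filter_upwards [ae_restrict_mem hΩm] with x hx
    beta_reduce
    rw [← hFTC x hx]; ring
  -- the scheme equation
  have Escheme : (∫ x, Pi w x * (δt⁻¹ * (Pi q x - Pi qm x)) ∂(volume.restrict Ω))
      + (∫ x, ⟪B x (G q x), G w x⟫ ∂(volume.restrict Ω))
      = ∫ x, g (Pi p x) (Pi q x) * Pi w x ∂(volume.restrict Ω) := by
    have h := hstep.2.2 w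
    have hcomm : (∫ x, Pi w x * (δt⁻¹ * (Pi q x - Pi qm x)) ∂(volume.restrict Ω))
        = ∫ x, δt⁻¹ * (Pi q x - Pi qm x) * (Pi w x) ∂(volume.restrict Ω) := by
      refine integral_congr_ae (Filter.Eventually.of_forall fun x => ?_); ring
    rw [hcomm]
    exact h
  -- three bounds
  have Brt : (∫ x, Pi w x * (δt⁻¹ * (Pi Q x - Pi Qm x)
      - δt⁻¹ * (qbar t₁ x - qbar t₀ x)) ∂(volume.restrict Ω)) ≤ CD * Et * ‖G w‖ := by
    have h1 := abs_integral_mul_le hPw hrt_m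
    rw [show (eLpNorm (⇑(Pi w)) 2 (volume.restrict Ω)).toReal = ‖Pi w‖ from (Lp.norm_def _).symm] at h1
    have h3 : (eLpNorm (fun x => δt⁻¹ * (Pi Q x - Pi Qm x)
        - δt⁻¹ * (qbar t₁ x - qbar t₀ x)) 2 (volume.restrict Ω)).toReal ≤ Et :=
      ENNReal.toReal_le_of_le_ofReal hEt0 hEt
    calc (∫ x, Pi w x * (δt⁻¹ * (Pi Q x - Pi Qm x)
          - δt⁻¹ * (qbar t₁ x - qbar t₀ x)) ∂(volume.restrict Ω))
        ≤ |∫ x, Pi w x * (δt⁻¹ * (Pi Q x - Pi Qm x)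
          - δt⁻¹ * (qbar t₁ x - qbar t₀ x)) ∂(volume.restrict Ω)| := le_abs_self _
      _ ≤ ‖Pi w‖ * Et :=
          le_trans h1 (mul_le_mul_of_nonneg_left h3 (norm_nonneg _))
      _ ≤ (CD * ‖G w‖) * Et := mul_le_mul_of_nonneg_right (hCD w) hEt0
      _ = CD * Et * ‖G w‖ := by ring
  have Brg : (∫ x, ⟪B x (G Q x - δt⁻¹ • ∫ s in t₀..t₁, gradq s x), G w x⟫ ∂(volume.restrict Ω))
      ≤ d₂ * Eg * ‖G w‖ := by
    have hint1 : Integrable (fun x => ‖G Q x - δt⁻¹ • ∫ s in t₀..t₁, gradq s x‖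
        * ‖G w x‖) (volume.restrict Ω) := mul_integrable hrg_m.norm hGw.norm
    have step1 : (∫ x, ⟪B x (G Q x - δt⁻¹ • ∫ s in t₀..t₁, gradq s x), G w x⟫ ∂(volume.restrict Ω))
        ≤ ∫ x, d₂ * (‖G Q x - δt⁻¹ • ∫ s in t₀..t₁, gradq s x‖ * ‖G w x‖) ∂(volume.restrict Ω) := by
      refine integral_mono_ae (intB _ hrg_m) (hint1.const_mul d₂)
        (Filter.Eventually.of_forall fun x => ?_)
      calc ⟪B x (G Q x - δt⁻¹ • ∫ s in t₀..t₁, gradq s x), G w x⟫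
          ≤ |⟪B x (G Q x - δt⁻¹ • ∫ s in t₀..t₁, gradq s x), G w x⟫| := le_abs_self _
        _ ≤ ‖B x (G Q x - δt⁻¹ • ∫ s in t₀..t₁, gradq s x)‖ * ‖G w x‖ :=
            abs_real_inner_le_norm _ _
        _ ≤ (d₂ * ‖G Q x - δt⁻¹ • ∫ s in t₀..t₁, gradq s x‖) * ‖G w x‖ :=
            mul_le_mul_of_nonneg_right (hBop x _) (norm_nonneg _)
        _ = d₂ * (‖G Q x - δt⁻¹ • ∫ s in t₀..t₁, gradq s x‖ * ‖G w x‖) := by ring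
    have step2 : (∫ x, d₂ * (‖G Q x - δt⁻¹ • ∫ s in t₀..t₁, gradq s x‖ * ‖G w x‖) ∂(volume.restrict Ω))
        = d₂ * ∫ x, ‖G Q x - δt⁻¹ • ∫ s in t₀..t₁, gradq s x‖ * ‖G w x‖ ∂(volume.restrict Ω) :=
      integral_const_mul d₂ _
    have step3 : (∫ x, ‖G Q x - δt⁻¹ • ∫ s in t₀..t₁, gradq s x‖ * ‖G w x‖ ∂(volume.restrict Ω))
        ≤ Eg * ‖G w‖ := by
      have h := abs_integral_mul_le hrg_m.norm hGw.norm
      rw [eLpNorm_norm, eLpNorm_norm] at h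
      refine le_trans (le_trans (le_abs_self _) h) ?_
      have h4 : (eLpNorm (fun x => G Q x - δt⁻¹ • ∫ s in t₀..t₁, gradq s x) 2 (volume.restrict Ω)).toReal
          ≤ Eg := ENNReal.toReal_le_of_le_ofReal hEg0 hEg
      have h5 : (eLpNorm (⇑(G w)) 2 (volume.restrict Ω)).toReal = ‖G w‖ := (Lp.norm_def _).symm
      rw [h5]
      exact mul_le_mul_of_nonneg_right h4 (norm_nonneg _)
    calc (∫ x, ⟪B x (G Q x - δt⁻¹ • ∫ s in t₀..t₁, gradq s x), G w x⟫ ∂(volume.restrict Ω))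
        ≤ d₂ * ∫ x, ‖G Q x - δt⁻¹ • ∫ s in t₀..t₁, gradq s x‖ * ‖G w x‖ ∂(volume.restrict Ω) := by
          rw [← step2]; exact step1
      _ ≤ d₂ * (Eg * ‖G w‖) := mul_le_mul_of_nonneg_left step3 hd₂0
      _ = d₂ * Eg * ‖G w‖ := by ring
  have BWB : (∫ x, Pi w x * (δt⁻¹ * ∫ s in t₀..t₁, divB s x) ∂(volume.restrict Ω))
      + (∫ x, ⟪B x (δt⁻¹ • ∫ s in t₀..t₁, gradq s x), G w x⟫ ∂(volume.restrict Ω)) ≤ WB * ‖G w‖ := by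
    have h := hWB w
    rw [integral_add int_Db (intB _ hGa_m)] at h
    exact le_trans (le_abs_self _) h
  have hdistrib : (CD * Et + d₂ * Eg + WB) * ‖G w‖
      = CD * Et * ‖G w‖ + d₂ * Eg * ‖G w‖ + WB * ‖G w‖ := by ring
  linarith [E1, E2, E3, E4, E5, E6, Escheme, Brt, Brg, BWB]
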